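/- arXiv:1910.04605 — 3 statements merged into one kernel-verified Lean document; each statement's English description precedes it below -/
import Mathlib

section
/- Let M be a connected loopless matroid with more than one element, and let C be a circuit of M of maximum size. Then every circuit of the contraction M/C has size strictly less than |C|. -/
open Set Matroid

variable {α : Type*}

/-- A circuit of a matroid: a minimally dependent subset of the ground set. -/
def Matroid.IsCircuit' (M : Matroid α) (C : Set α) : Prop :=
  C ⊆ M.E ∧ ¬ M.Indep C ∧ ∀ D ⊂ C, M.Indep D

/-- A matroid is loopless if no single element forms a circuit, i.e. every
singleton of the ground set is independent. -/
def Matroid.Loopless' (M : Matroid α) : Prop := ∀ e ∈ M.E, M.Indep {e}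

/-- A matroid is connected if any two distinct elements of the ground set lie
in a common circuit. -/
def Matroid.Connected' (M : Matroid α) : Prop :=
  ∀ e ∈ M.E, ∀ f ∈ M.E, e ≠ f → ∃ C, M.IsCircuit' C ∧ e ∈ C ∧ f ∈ C

/-- The contraction `M/C`, defined by duality: `M/C = (M✶ \ C)✶`. -/
def Matroid.contract' (M : Matroid α) (C : Set α) : Matroid α :=
  (M✶ ↾ (M.E \ C))✶

/-! If a circuit `D` of `M ／ C` is not a circuit of `M`, it is a proper subset of one and so has
fewer than `|C|` elements. Otherwise `C` and `D` are skew circuits of `M`. Connectivity gives a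
circuit meeting both; take one, `Z`, with `Z \ (C ∪ D)` minimal, pick `x` there and contract
`S = Z \ (C ∪ D ∪ {x})`. By minimality `C` and `D` stay circuits and are the only circuits
inside `C ∪ D`, while `Z \ S` is a circuit through `x` meeting both. Two strong eliminations
produce a second circuit `V'` through `x` with `C ∪ D ⊆ (Z \ S) ∪ V'`, so these two circuits,
which lift to circuits of `M`, have at least `|C| + |D| + 2` elements together. Both have at most
`|C|` elements, hence `|D| ≤ |C| - 2`. -/

namespace Matroid

variable {M : Matroid α} {A B C D K S V V₁ V₂ W Z : Set α} {b e f g t x : α}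

lemma isCircuit'_iff : M.IsCircuit' C ↔ M.IsCircuit C := by
  rw [isCircuit_iff_forall_ssubset, Dep, IsCircuit']
  tauto

lemma contract'_eq_contract (M : Matroid α) (C : Set α) : M.contract' C = M ／ C := rfl

lemma IsCircuit.exists_isCircuit_inter_sdiff_nonempty (hZ : M.IsCircuit Z) (hW : M.IsCircuit W)
    (htZ : t ∈ Z) (htW : t ∈ W) (hbZ : b ∈ Z) (hbW : b ∉ W) :
    ∃ K ⊆ (Z ∪ W) \ {t}, M.IsCircuit K ∧ b ∈ K ∧ (K ∩ (W \ Z)).Nonempty := by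
  obtain ⟨K, hKss, hK, hbK⟩ := hZ.strong_elimination hW htZ htW hbZ hbW
  refine ⟨K, hKss, hK, hbK, not_not.1 fun hKW ↦ hZ.not_ssubset hK ⟨fun y hy ↦ ?_, fun hZK ↦ ?_⟩⟩
  · by_contra hyZ
    exact hKW ⟨y, hy, (hKss hy).1.resolve_left hyZ, hyZ⟩
  · exact (hKss (hZK htZ)).2 rfl

lemma IsCircuit.sdiff_eq_of_contract_isCircuit (hZ : M.IsCircuit Z) (hD : (M ／ C).IsCircuit D)
    (hZCD : Z ⊆ C ∪ D) (hZC : ¬ Z ⊆ C) : Z \ C = D :=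
  hD.eq_of_dep_subset (hZ.contract_dep_of_not_subset hZC) (sdiff_subset_iff.2 hZCD)

lemma IsCircuit.isCircuit_contract_of_forall_subset_union (hC : M.IsCircuit C) (hS : M.Indep S)
    (hCS : Disjoint C S) (h : ∀ W, M.IsCircuit W → W ⊆ C ∪ S → W = C) :
    (M ／ S).IsCircuit C := by
  refine isCircuit_iff_forall_ssubset.2 ⟨hS.contract_dep_iff.2 ⟨hCS, ?_⟩, fun I hIC ↦ ?_⟩
  · exact hC.dep.superset subset_union_left (union_subset hC.subset_ground hS.subset_ground)
  refine hS.contract_indep_iff.2 ⟨hCS.mono_left hIC.subset, not_not.1 fun hdep ↦ ?_⟩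
  obtain ⟨W, hWss, hW⟩ := (M.dep_of_not_indep hdep
    (union_subset (hIC.subset.trans hC.subset_ground) hS.subset_ground)).exists_isCircuit_subset
  have hWC := h W hW (hWss.trans (union_subset_union_left _ hIC.subset))
  refine hIC.not_subset fun y hy ↦ ?_
  rw [← hWC] at hy
  exact (hWss hy).resolve_right (hCS.notMem_of_mem_left (hWC ▸ hy))

lemma IsCircuit.subset_union_of_mem_sdiff (hV₁ : M.IsCircuit V₁) (hV₂ : M.IsCircuit V₂)
    (hskew : ∀ K, M.IsCircuit K → K ⊆ C ∪ D → K = C ∨ K = D)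
    (hV₁ss : V₁ ⊆ insert x (C ∪ D)) (hV₂ss : V₂ ⊆ insert x (C ∪ D))
    (hx₁ : x ∈ V₁) (hx₂ : x ∈ V₂) (hg : g ∈ V₁ \ V₂) (hgD : g ∉ D) :
    C ⊆ V₁ ∪ V₂ := by
  obtain ⟨K, hKss, hK, hgK⟩ := hV₁.strong_elimination hV₂ hx₁ hx₂ hg.1 hg.2
  have hKCD : K ⊆ C ∪ D := by
    have := union_subset hV₁ss hV₂ss
    intro y hy
    exact (this (hKss hy).1).resolve_left (hKss hy).2
  obtain rfl | rfl := hskew K hK hKCD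
  · exact hKss.trans sdiff_subset
  · exact absurd hgK hgD

lemma IsCircuit.exists_isCircuit_mem_notMem_notMem (hV : M.IsCircuit V) (hC : M.IsCircuit C)
    (hD : M.IsCircuit D) (hxV : x ∈ V) (hxC : x ∉ C) (hxD : x ∉ D) (heV : e ∈ V) (heC : e ∈ C)
    (heD : e ∉ D) (hfD : f ∈ D) :
    ∃ V' ⊆ V ∪ C ∪ D, M.IsCircuit V' ∧ x ∈ V' ∧ e ∉ V' ∧ f ∉ V' := by
  obtain ⟨V₀, hV₀ss, hV₀, hxV₀⟩ := hV.strong_elimination hC heV heC hxV hxC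
  have heV₀ : e ∉ V₀ := fun h ↦ (hV₀ss h).2 rfl
  by_cases hfV₀ : f ∈ V₀
  · obtain ⟨V', hV'ss, hV', hxV'⟩ := hV₀.strong_elimination hD hfV₀ hfD hxV₀ hxD
    refine ⟨V', ?_, hV', hxV', fun he ↦ (hV'ss he).1.elim heV₀ heD, fun hf ↦ (hV'ss hf).2 rfl⟩
    tauto_set
  · exact ⟨V₀, by tauto_set, hV₀, hxV₀, heV₀, hfV₀⟩

lemma ncard_add_ncard_add_two_le (hV₁ : V₁.Finite) (hV₂ : V₂.Finite) (hCD : Disjoint C D)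
    (hcov : C ∪ D ⊆ V₁ ∪ V₂) (hx₁ : x ∈ V₁) (hx₂ : x ∈ V₂) (hx : x ∉ C ∪ D) :
    C.ncard + D.ncard + 2 ≤ V₁.ncard + V₂.ncard := by
  have hfin := hV₁.union hV₂
  have hunion : (insert x (C ∪ D)).ncard ≤ (V₁ ∪ V₂).ncard :=
    ncard_le_ncard (insert_subset (Or.inl hx₁) hcov) hfin
  rw [ncard_insert_of_notMem hx (hfin.subset hcov),
    ncard_union_eq hCD (hfin.subset (subset_union_left.trans hcov))
      (hfin.subset (subset_union_right.trans hcov))] at hunion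
  have hinter : 1 ≤ (V₁ ∩ V₂).ncard := Nat.one_le_iff_ne_zero.2 <|
    (ncard_pos (hV₁.inter_of_left _)).2 ⟨x, hx₁, hx₂⟩ |>.ne'
  have := ncard_union_add_ncard_inter V₁ V₂ hV₁ hV₂
  omega

lemma exists_isCircuit_ncard_add_le [M.Finitary] (hC : M.IsCircuit C) (hD : M.IsCircuit D)
    (hCD : Disjoint C D) (hskew : ∀ K, M.IsCircuit K → K ⊆ C ∪ D → K = C ∨ K = D)
    (hV : M.IsCircuit V) (hxV : x ∈ V) (hVss : V ⊆ insert x (C ∪ D)) (hx : x ∉ C ∪ D)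
    (hVC : (V ∩ C).Nonempty) (hVD : (V ∩ D).Nonempty) :
    ∃ V', M.IsCircuit V' ∧ C.ncard + D.ncard + 2 ≤ V.ncard + V'.ncard := by
  obtain ⟨e, heV, heC⟩ := hVC
  obtain ⟨f, hfV, hfD⟩ := hVD
  obtain ⟨V', hV'ss, hV', hxV', heV', hfV'⟩ := hV.exists_isCircuit_mem_notMem_notMem hC hD hxV
    (fun h ↦ hx (Or.inl h)) (fun h ↦ hx (Or.inr h)) heV heC (hCD.notMem_of_mem_left heC) hfD
  have hV'ss' : V' ⊆ insert x (C ∪ D) := hV'ss.trans <| union_subset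
    (union_subset hVss (subset_union_left.trans (subset_insert _ _)))
    (subset_union_right.trans (subset_insert _ _))
  have hCcov := hV.subset_union_of_mem_sdiff hV' hskew hVss hV'ss' hxV hxV' ⟨heV, heV'⟩
    (hCD.notMem_of_mem_left heC)
  have hDcov := hV.subset_union_of_mem_sdiff hV'
    (fun K hK hKss ↦ (hskew K hK (union_comm D C ▸ hKss)).symm) (union_comm C D ▸ hVss)
    (union_comm C D ▸ hV'ss') hxV hxV' ⟨hfV, hfV'⟩ (hCD.notMem_of_mem_right hfD)
  exact ⟨V', hV', ncard_add_ncard_add_two_le hV.finite hV'.finite hCD (union_subset hCcov hDcov)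
    hxV hxV' hx⟩

lemma IsCircuit.isCircuit_contract_of_minimal (hA : M.IsCircuit A) (hZ : M.IsCircuit Z)
    (hS : M.Indep S) (hSZ : S ⊆ Z \ (A ∪ B)) (hb : b ∈ Z ∩ B) (hAB : Disjoint A B)
    (hmin : ∀ K, M.IsCircuit K → (K ∩ A).Nonempty → (K ∩ B).Nonempty →
      ¬ K \ (A ∪ B) ⊂ Z \ (A ∪ B)) :
    (M ／ S).IsCircuit A := by
  have hAS : Disjoint A S := by tauto_set
  refine hA.isCircuit_contract_of_forall_subset_union hS hAS fun W hW hWss ↦ ?_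
  by_contra hWA
  -- Eliminating some `t ∈ W ∩ S` from `Z` gives a circuit meeting `A` and `B` that misses `t`.
  obtain ⟨t, htW, htS⟩ : (W ∩ S).Nonempty := by
    by_contra! hWS
    exact hWA (hW.eq_of_subset_isCircuit hA (by tauto_set))
  have hbW : b ∉ W := fun h ↦ (hWss h).elim (hAB.notMem_of_mem_right hb.2) fun h' ↦ (hSZ h').2
    (Or.inr hb.2)
  obtain ⟨K, hKss, hK, hbK, a, haK, haW, haZ⟩ :=
    hZ.exists_isCircuit_inter_sdiff_nonempty hW (hSZ htS).1 htW hb.1 hbW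
  have haA : a ∈ A := (hWss haW).resolve_right fun h ↦ haZ (hSZ h).1
  refine hmin K hK ⟨a, haK, haA⟩ ⟨b, hbK, hb.2⟩ ⟨fun y ⟨hyK, hyAB⟩ ↦ ⟨?_, hyAB⟩, fun hZK ↦ ?_⟩
  · obtain ⟨hyZ | hyW, -⟩ := hKss hyK
    · exact hyZ
    · exact (hSZ ((hWss hyW).resolve_left fun h ↦ hyAB (Or.inl h))).1
  · exact (hKss (hZK (hSZ htS)).1).2 rfl

lemma eq_or_eq_of_isCircuit_contract_of_minimal (hCS : (M ／ S).IsCircuit C)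
    (hDS : (M ／ S).IsCircuit D) (hSZ : S ⊂ Z \ (C ∪ D))
    (hmin : ∀ K, M.IsCircuit K → (K ∩ C).Nonempty → (K ∩ D).Nonempty →
      ¬ K \ (C ∪ D) ⊂ Z \ (C ∪ D))
    (hK : (M ／ S).IsCircuit K) (hKCD : K ⊆ C ∪ D) : K = C ∨ K = D := by
  obtain ⟨W, hW, hKW, hWss⟩ := hK.exists_subset_isCircuit_of_contract
  have hWCD : ¬ ((W ∩ C).Nonempty ∧ (W ∩ D).Nonempty) := fun ⟨hWC, hWD⟩ ↦
    hmin W hW hWC hWD ((show W \ (C ∪ D) ⊆ S by tauto_set).trans_ssubset hSZ)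
  by_cases hKD : (K ∩ D).Nonempty
  · have hWC : ¬ (W ∩ C).Nonempty := fun h ↦ hWCD ⟨h, hKD.mono (inter_subset_inter_left _ hKW)⟩
    rw [not_nonempty_iff_eq_empty] at hWC
    exact Or.inr (hK.eq_of_subset_isCircuit hDS (by tauto_set))
  · rw [not_nonempty_iff_eq_empty] at hKD
    exact Or.inl (hK.eq_of_subset_isCircuit hCS (by tauto_set))

lemma exists_isCircuit_ncard_add_le_of_minimal [M.Finitary] (hC : M.IsCircuit C)
    (hD : M.IsCircuit D) (hDC : (M ／ C).IsCircuit D) (hZ : M.IsCircuit Z)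
    (hZC : (Z ∩ C).Nonempty) (hZD : (Z ∩ D).Nonempty)
    (hmin : ∀ K, M.IsCircuit K → (K ∩ C).Nonempty → (K ∩ D).Nonempty →
      ¬ K \ (C ∪ D) ⊂ Z \ (C ∪ D)) :
    ∃ V₁ V₂, M.IsCircuit V₁ ∧ M.IsCircuit V₂ ∧ C.ncard + D.ncard + 2 ≤ V₁.ncard + V₂.ncard := by
  have hCD : Disjoint C D := (subset_sdiff.1 hDC.subset_ground).2.symm
  obtain ⟨c, hcZ, hcC⟩ := hZC
  obtain ⟨d, hdZ, hdD⟩ := hZD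
  -- `C` and `D` are skew, so no circuit inside `C ∪ D` meets both.
  obtain ⟨x, hxZ, hx⟩ : (Z \ (C ∪ D)).Nonempty := by
    by_contra! hZCD
    have hDZ := hZ.sdiff_eq_of_contract_isCircuit hDC (by tauto_set)
      fun hZC ↦ hCD.notMem_of_mem_left (hZC hdZ) hdD
    exact hZ.not_ssubset hD ⟨hDZ ▸ sdiff_subset, fun hDZ ↦ hCD.notMem_of_mem_left hcC (hDZ hcZ)⟩
  set S : Set α := (Z \ (C ∪ D)) \ {x}
  have hST : S ⊂ Z \ (C ∪ D) := sdiff_singleton_ssubset.2 ⟨hxZ, hx⟩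
  have hSZ : S ⊂ Z := hST.trans_subset sdiff_subset
  have hS : M.Indep S := hZ.ssubset_indep hSZ
  have hCS := hC.isCircuit_contract_of_minimal hZ hS hST.subset ⟨hdZ, hdD⟩ hCD hmin
  have hDS := hD.isCircuit_contract_of_minimal hZ hS (union_comm C D ▸ hST.subset) ⟨hcZ, hcC⟩
    hCD.symm fun K hK hKD hKC ↦ union_comm C D ▸ hmin K hK hKC hKD
  have hZSx : Z \ S ⊆ insert x (C ∪ D) := fun y ⟨hyZ, hyS⟩ ↦
    (eq_or_ne y x).imp_right fun hyx ↦ by_contra fun hy ↦ hyS ⟨⟨hyZ, hy⟩, hyx⟩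
  obtain ⟨V', hV', hle⟩ := exists_isCircuit_ncard_add_le hCS hDS hCD
    (fun K hK hKCD ↦ eq_or_eq_of_isCircuit_contract_of_minimal hCS hDS hST hmin hK hKCD)
    (hZ.contract_isCircuit hSZ) ⟨hxZ, fun h ↦ h.2 rfl⟩ hZSx hx
    ⟨c, ⟨hcZ, fun h ↦ (hST.subset h).2 (Or.inl hcC)⟩, hcC⟩
    ⟨d, ⟨hdZ, fun h ↦ (hST.subset h).2 (Or.inr hdD)⟩, hdD⟩
  obtain ⟨V₁, hV₁, hV₁ss, -⟩ := (hZ.contract_isCircuit hSZ).exists_subset_isCircuit_of_contract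
  obtain ⟨V₂, hV₂, hV₂ss, -⟩ := hV'.exists_subset_isCircuit_of_contract
  exact ⟨V₁, V₂, hV₁, hV₂, hle.trans
    (add_le_add (ncard_le_ncard hV₁ss hV₁.finite) (ncard_le_ncard hV₂ss hV₂.finite))⟩

theorem exists_isCircuit_ncard_add_le_of_contract_isCircuit [M.Finitary] (hC : M.IsCircuit C)
    (hD : M.IsCircuit D) (hDC : (M ／ C).IsCircuit D) (hZ : M.IsCircuit Z)
    (hZC : (Z ∩ C).Nonempty) (hZD : (Z ∩ D).Nonempty) :
    ∃ V₁ V₂, M.IsCircuit V₁ ∧ M.IsCircuit V₂ ∧ C.ncard + D.ncard + 2 ≤ V₁.ncard + V₂.ncard := by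
  obtain ⟨Z₀, ⟨hZ₀, hZ₀C, hZ₀D⟩, hmin⟩ := (measure fun K : Set α ↦ (K \ (C ∪ D)).ncard).wf.has_min
    {K | M.IsCircuit K ∧ (K ∩ C).Nonempty ∧ (K ∩ D).Nonempty} ⟨Z, hZ, hZC, hZD⟩
  exact exists_isCircuit_ncard_add_le_of_minimal hC hD hDC hZ₀ hZ₀C hZ₀D
    fun K hK hKC hKD hlt ↦ hmin K ⟨hK, hKC, hKD⟩ (ncard_lt_ncard hlt hZ₀.finite.sdiff)

end Matroid

theorem seymour_max_circuit_contract_general (M : Matroid α) [M.Finite]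
    (hConn : M.Connected')
    (C : Set α) (hC : M.IsCircuit' C)
    (hCmax : ∀ C', M.IsCircuit' C' → C'.ncard ≤ C.ncard) :
    ∀ C', (M.contract' C).IsCircuit' C' → C'.ncard < C.ncard := by
  simp only [Connected', isCircuit'_iff, contract'_eq_contract] at hConn hC hCmax ⊢
  intro D hD
  obtain ⟨D', hD', hDD', -⟩ := hD.exists_subset_isCircuit_of_contract
  obtain rfl | hne := eq_or_ne D D'
  · obtain ⟨c, hc⟩ := hC.nonempty
    obtain ⟨d, hd⟩ := hD.nonempty
    obtain ⟨Z, hZ, hcZ, hdZ⟩ := hConn c (hC.subset_ground hc) d (hD'.subset_ground hd)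
      fun h ↦ (hD.subset_ground hd).2 (h ▸ hc)
    obtain ⟨V₁, V₂, hV₁, hV₂, hle⟩ :=
      exists_isCircuit_ncard_add_le_of_contract_isCircuit hC hD' hD hZ ⟨c, hcZ, hc⟩ ⟨d, hdZ, hd⟩
    linarith [hCmax D hD', hCmax V₁ hV₁, hCmax V₂ hV₂]
  · exact (ncard_lt_ncard (hDD'.ssubset_of_ne hne) hD'.finite).trans_le (hCmax D' hD')

/-- **Seymour's lemma.** If `M` is a connected loopless matroid with more than one
element and `C` is a maximum-size circuit of `M`, then every circuit of the
contraction `M/C` has size strictly smaller than `|C|`. -/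
theorem seymour_max_circuit_contract (M : Matroid α) [M.Finite]
    (hLoopless : M.Loopless') (hConn : M.Connected') (hcard : 1 < M.E.ncard)
    (C : Set α) (hC : M.IsCircuit' C)
    (hCmax : ∀ C', M.IsCircuit' C' → C'.ncard ≤ C.ncard) :
    ∀ C', (M.contract' C).IsCircuit' C' → C'.ncard < C.ncard :=
  seymour_max_circuit_contract_general M hConn C hC hCmax
end

section
/- Fix a field F and an integer d >= 1. Let B be a family of (d+1)-element subsets of a finite vertex set (i.e., a family of d-simplices), and suppose |B| = binom(x+1, d+1) for a real number x >= d. Then the rank over F of the set of boundaries { ∂σ : σ ∈ B } is at least binom(x, d), where binom with real top argument denotes the generalized binomial coefficient x(x-1)...(x-d+1)/d! and ∂σ is the simplicial boundary of σ. -/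
open Finset

/-- The simplicial boundary of a simplex `σ` (a finite set of vertices from a linearly
ordered vertex set), as an element of the free `F`-vector space on the set of all
simplices: if `σ = [v_0, …, v_d]` with `v_0 < ⋯ < v_d`, then
`∂σ = ∑ⱼ (-1)ʲ [v_0, …, v̂_j, …, v_d]`. -/
noncomputable def sbdry (F : Type) [Field F] {V : Type} [LinearOrder V]
    (σ : Finset V) : (Finset V) →₀ F :=
  ∑ v ∈ σ, ((-1 : F) ^ ((σ.filter (fun w => w < v)).card)) •
    Finsupp.single (σ.erase v) (1 : F)

/-- `c` is a `d`-cycle over `F`: an `F`-linear combination of `d`-simplices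
(i.e. `(d+1)`-element vertex sets) whose boundary is `0`. -/
def IsCycle (F : Type) [Field F] {V : Type} [LinearOrder V] (d : ℕ)
    (c : (Finset V) →₀ F) : Prop :=
  (∀ σ ∈ c.support, σ.card = d + 1) ∧ ∑ σ ∈ c.support, c σ • sbdry F σ = 0

/-- A nontrivial `d`-cycle is simple if its support does not strictly contain the
support of any other nontrivial `d`-cycle. -/
def IsSimpleCycle (F : Type) [Field F] {V : Type} [LinearOrder V] (d : ℕ)
    (c : (Finset V) →₀ F) : Prop :=
  IsCycle F d c ∧ c ≠ 0 ∧
    ∀ c' : (Finset V) →₀ F, IsCycle F d c' → c' ≠ 0 → c'.support ⊆ c.support →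
      c'.support = c.support

/-- The rank over `F` of a finite set `A` of `d`-simplices: the dimension of the span
of the boundaries of the members of `A`. -/
noncomputable def rankBd (F : Type) [Field F] {V : Type} [LinearOrder V]
    (A : Finset (Finset V)) : ℕ :=
  Module.finrank F (Submodule.span F ((fun σ => sbdry F σ) '' (↑A : Set (Finset V))))

/-!
Induction on `#B`. Let `v` be the largest vertex, `L = B.memberSubfamily v` its link and
`N = B.nonMemberSubfamily v`. As `v` comes last in every simplex containing it, the map
`[τ] ↦ [τ \ v]` (zero when `v ∉ τ`) sends `∂σ` to `∂(σ \ v)` for `v ∈ σ` and kills `∂σ` for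
`v ∉ σ`, so rank–nullity gives `rank B ≥ rank L + rank N`; projecting onto the faces avoiding `v`
gives `rank B ≥ #L`. If `#L ≥ C(x,d)` we are done. Otherwise write `#L = C(y+1,d)` and
`#N = C(z+1,d+1)`; induction gives `rank B ≥ C(y,d-1) + C(z,d)`, which is at least `C(x,d)`
because `C(t-1,d)` is a concave function of `C(t,d+1)`: the ratio of their derivatives decreases,
so Cauchy's mean value theorem compares the chords.
-/

open Polynomial

theorem hasDerivAt_descPochhammer_eval (n : ℕ) {r : ℝ} (h : (n : ℝ) - 1 < r) :
    HasDerivAt (fun s => (descPochhammer ℝ n).eval s)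
      ((descPochhammer ℝ n).eval r * ∑ i ∈ range n, (r - i)⁻¹) r := by
  induction n with
  | zero => simpa using hasDerivAt_const r (1 : ℝ)
  | succ n ih =>
    push_cast at h
    have hrn : r - n ≠ 0 := by linarith
    simp only [descPochhammer_succ_eval, sum_range_succ]
    refine ((ih (by linarith)).fun_mul ((hasDerivAt_id' r).sub_const (n : ℝ))).congr_deriv ?_
    field_simp

theorem sum_range_inv_sub_nonneg {n : ℕ} {r : ℝ} (h : (n : ℝ) - 1 < r) :
    0 ≤ ∑ i ∈ range n, (r - i)⁻¹ :=
  sum_nonneg fun i hi => by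
    have : (i : ℝ) + 1 ≤ n := by exact_mod_cast mem_range.1 hi
    exact inv_nonneg.2 (by linarith)

theorem antitoneOn_sum_range_inv_sub (n : ℕ) :
    AntitoneOn (fun r : ℝ => ∑ i ∈ range n, (r - i)⁻¹) (Set.Ioi ((n : ℝ) - 1)) :=
  fun r hr s _ hrs => sum_le_sum fun i hi => by
    have : (i : ℝ) + 1 ≤ n := by exact_mod_cast mem_range.1 hi
    exact inv_anti₀ (by simp only [Set.mem_Ioi] at hr; linarith) (by linarith)

namespace Ring

theorem choose_eq_descPochhammer_eval_div (r : ℝ) (n : ℕ) :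
    choose r n = (descPochhammer ℝ n).eval r / n.factorial := by
  rw [choose_eq_smul, smul_eq_mul, inv_mul_eq_div, ← descPochhammer_map (Int.castRingHom ℝ),
    eval_map, ← aeval_eq_smeval, aeval_def]
  rfl

theorem continuous_choose (n : ℕ) : Continuous fun r : ℝ => choose r n := by
  simp only [choose_eq_descPochhammer_eval_div]
  exact (descPochhammer ℝ n).continuous.div_const _

theorem choose_pos {r : ℝ} {n : ℕ} (h : (n : ℝ) - 1 < r) : 0 < choose r n := by
  rw [choose_eq_descPochhammer_eval_div]
  exact div_pos (descPochhammer_pos h) (by positivity)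

theorem choose_nonneg {r : ℝ} {n : ℕ} (h : (n : ℝ) - 1 ≤ r) : 0 ≤ choose r n := by
  rw [choose_eq_descPochhammer_eval_div]
  exact div_nonneg (descPochhammer_nonneg h) (by positivity)

theorem monotoneOn_choose (n : ℕ) :
    MonotoneOn (fun r : ℝ => choose r n) (Set.Ici ((n : ℝ) - 1)) := by
  intro r hr s hs hrs
  simp only [choose_eq_descPochhammer_eval_div]
  gcongr
  exact monotoneOn_descPochhammer_eval n hr hs hrs

theorem one_le_choose {r : ℝ} {n : ℕ} (h : (n : ℝ) ≤ r) : 1 ≤ choose r n := by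
  have hn : (n : ℝ) - 1 ≤ n := by linarith
  calc (1 : ℝ) = choose (n : ℝ) n := by rw [choose_natCast, Nat.choose_self, Nat.cast_one]
    _ ≤ choose r n := monotoneOn_choose n hn (hn.trans h) h

theorem succ_mul_choose_succ (r : ℝ) (n : ℕ) :
    (n + 1) * choose r (n + 1) = r * choose (r - 1) n := by
  have h := choose_smul_choose r (Nat.le_add_left 1 n)
  rwa [Nat.choose_one_right, choose_one_right, Nat.add_sub_cancel, nsmul_eq_mul,
    Nat.cast_add_one, Nat.cast_one] at h

theorem exists_choose_eq {n : ℕ} (hn : 1 ≤ n) {s : ℝ} (hs : 1 ≤ s) :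
    ∃ r : ℝ, (n : ℝ) ≤ r ∧ choose r n = s := by
  set T : ℝ := n + n.factorial * s
  have hs0 : 0 ≤ n.factorial * s := by positivity
  have hnT : (n : ℝ) ≤ T := by linarith
  have hsT : s ≤ choose T n := by
    have hbase : (1 : ℝ) ≤ T - n + 1 := by linarith
    rw [choose_eq_descPochhammer_eval_div, le_div_iff₀ (by positivity)]
    calc s * n.factorial = T - n := by ring
      _ ≤ (T - n + 1) := by linarith
      _ ≤ (T - n + 1) ^ n := le_self_pow₀ hbase (by omega)
      _ ≤ _ := pow_le_descPochhammer_eval (by linarith)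
  obtain ⟨r, hr, hrs⟩ := intermediate_value_Icc hnT (continuous_choose n).continuousOn
    ⟨by rw [choose_natCast, Nat.choose_self, Nat.cast_one]; exact hs, hsT⟩
  exact ⟨r, hr.1, hrs⟩

theorem exists_natCast_eq_choose (k : ℕ) {n : ℕ} (hn : 1 ≤ n) :
    ∃ y : ℝ, (k : ℝ) ≤ y ∧ (n : ℝ) = choose (y + 1) (k + 1) := by
  obtain ⟨r, hr, hrn⟩ := exists_choose_eq (Nat.le_add_left 1 k) (Nat.one_le_cast.2 hn)
  exact ⟨r - 1, by push_cast at hr; linarith, by rw [sub_add_cancel, hrn]⟩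

theorem hasDerivAt_choose (n : ℕ) {r : ℝ} (h : (n : ℝ) - 1 < r) :
    HasDerivAt (fun s => choose s n) (choose r n * ∑ i ∈ range n, (r - i)⁻¹) r := by
  simp only [choose_eq_descPochhammer_eval_div, div_mul_eq_mul_div]
  exact (hasDerivAt_descPochhammer_eval n h).div_const _

end Ring

open Set in
theorem chord_le_of_antitoneOn_deriv_div {f f' g g' : ℝ → ℝ} {a b c : ℝ}
    (hab : a ≤ b) (hbc : b ≤ c) (hf : ContinuousOn f (Icc a c)) (hg : ContinuousOn g (Icc a c))
    (hf' : ∀ t ∈ Ioo a c, HasDerivAt f (f' t) t) (hg' : ∀ t ∈ Ioo a c, HasDerivAt g (g' t) t)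
    (hg'_pos : ∀ t ∈ Ioo a c, 0 < g' t) (hanti : AntitoneOn (fun t => f' t / g' t) (Ioo a c)) :
    (f c - f b) * (g b - g a) ≤ (f b - f a) * (g c - g b) := by
  rcases hab.eq_or_lt with rfl | hab
  · simp
  rcases hbc.eq_or_lt with rfl | hbc
  · simp
  have hgmono : StrictMonoOn g (Icc a c) := strictMonoOn_of_deriv_pos (convex_Icc a c) hg
    (fun t ht => by
      rw [interior_Icc] at ht
      rw [(hg' t ht).deriv]
      exact hg'_pos t ht)
  have hgab : g a < g b := hgmono (left_mem_Icc.2 (hab.trans hbc).le) ⟨hab.le, hbc.le⟩ hab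
  have hgbc : g b < g c := hgmono ⟨hab.le, hbc.le⟩ (right_mem_Icc.2 (hab.trans hbc).le) hbc
  have hsub_ab : Ioo a b ⊆ Ioo a c := Ioo_subset_Ioo_right hbc.le
  have hsub_bc : Ioo b c ⊆ Ioo a c := Ioo_subset_Ioo_left hab.le
  obtain ⟨p, hp, hp_eq⟩ := exists_ratio_hasDerivAt_eq_ratio_slope f f' hab
    (hf.mono (Icc_subset_Icc_right hbc.le)) (fun t ht => hf' t (hsub_ab ht)) g g'
    (hg.mono (Icc_subset_Icc_right hbc.le)) (fun t ht => hg' t (hsub_ab ht))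
  obtain ⟨q, hq, hq_eq⟩ := exists_ratio_hasDerivAt_eq_ratio_slope f f' hbc
    (hf.mono (Icc_subset_Icc_left hab.le)) (fun t ht => hf' t (hsub_bc ht)) g g'
    (hg.mono (Icc_subset_Icc_left hab.le)) (fun t ht => hg' t (hsub_bc ht))
  have hgp := hg'_pos p (hsub_ab hp)
  have hgq := hg'_pos q (hsub_bc hq)
  have hratio : f' q * g' p ≤ f' p * g' q := by
    rw [← div_le_div_iff₀ hgq hgp]
    exact hanti (hsub_ab hp) (hsub_bc hq) (hp.2.trans hq.1).le
  have key : (f c - f b) * (g b - g a) * (g' p * g' q) ≤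
      (f b - f a) * (g c - g b) * (g' p * g' q) := by
    have hpos : 0 ≤ (g b - g a) * (g c - g b) := mul_nonneg (by linarith) (by linarith)
    calc (f c - f b) * (g b - g a) * (g' p * g' q)
        = (g b - g a) * (g c - g b) * (f' q * g' p) := by
          linear_combination -(g b - g a) * g' p * hq_eq
      _ ≤ (g b - g a) * (g c - g b) * (f' p * g' q) := mul_le_mul_of_nonneg_left hratio hpos
      _ = (f b - f a) * (g c - g b) * (g' p * g' q) := by
          linear_combination (g c - g b) * g' q * hp_eq
  exact le_of_mul_le_mul_right key (mul_pos hgp hgq)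

namespace Ring

theorem choose_sub_one_chord_le (k : ℕ) {a b c : ℝ} (ha : (k : ℝ) ≤ a) (hab : a ≤ b)
    (hbc : b ≤ c) :
    (choose (c - 1) k - choose (b - 1) k) * (choose b (k + 1) - choose a (k + 1)) ≤
      (choose (b - 1) k - choose (a - 1) k) * (choose c (k + 1) - choose b (k + 1)) := by
  set L : ℝ → ℝ := fun t => ∑ i ∈ range k, (t - 1 - i)⁻¹
  set f' : ℝ → ℝ := fun t => choose (t - 1) k * L t
  set g' : ℝ → ℝ := fun t => (choose (t - 1) k + t * f' t) / (k + 1)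
  have hpos : ∀ t, (k : ℝ) < t → 0 < choose (t - 1) k := fun t ht => choose_pos (by linarith)
  have hL_nonneg : ∀ t, (k : ℝ) < t → 0 ≤ L t := fun t ht => sum_range_inv_sub_nonneg (by linarith)
  have hL_anti : ∀ p q, (k : ℝ) < p → p ≤ q → L q ≤ L p := fun p q hp hpq =>
    antitoneOn_sum_range_inv_sub k (by simp only [Set.mem_Ioi]; linarith)
      (by simp only [Set.mem_Ioi]; linarith) (by linarith)
  have hf' : ∀ t, (k : ℝ) < t → HasDerivAt (fun s => choose (s - 1) k) (f' t) t := fun t ht =>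
    (hasDerivAt_choose k (by linarith)).comp_sub_const t 1
  have hg_eq : (fun s : ℝ => choose s (k + 1)) = fun s : ℝ => s * choose (s - 1) k / (k + 1) := by
    funext s
    rw [← succ_mul_choose_succ, mul_div_cancel_left₀ _ (by positivity)]
  have hg' : ∀ t, (k : ℝ) < t → HasDerivAt (fun s => choose s (k + 1)) (g' t) t := fun t ht => by
    rw [hg_eq]
    simpa only [one_mul, g'] using ((hasDerivAt_id' t).fun_mul (hf' t ht)).div_const ((k : ℝ) + 1)
  have hg'_pos : ∀ t, (k : ℝ) < t → 0 < g' t := fun t ht => by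
    have := mul_nonneg (mul_nonneg (by linarith : (0 : ℝ) ≤ t) (hpos t ht).le) (hL_nonneg t ht)
    exact div_pos (by simp only [f']; nlinarith [hpos t ht]) (by positivity)
  refine chord_le_of_antitoneOn_deriv_div (f := fun s => choose (s - 1) k) (f' := f')
    (g := fun s => choose s (k + 1)) (g' := g') hab hbc
    ((continuous_choose k).comp (continuous_sub_right 1)).continuousOn
    (continuous_choose (k + 1)).continuousOn
    (fun t ht => hf' t (ha.trans_lt ht.1)) (fun t ht => hg' t (ha.trans_lt ht.1))
    (fun t ht => hg'_pos t (ha.trans_lt ht.1)) ?_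
  intro p hp q hq hpq
  have hp' : (k : ℝ) < p := ha.trans_lt hp.1
  have hq' : (k : ℝ) < q := hp'.trans_le hpq
  dsimp only
  rw [div_le_div_iff₀ (hg'_pos q hq') (hg'_pos p hp')]
  simp only [g', f', mul_div_assoc']
  rw [div_le_div_iff_of_pos_right (by positivity)]
  have hLL := mul_nonneg (hL_nonneg p hp') (hL_nonneg q hq')
  have hkey : L q * (1 + p * L p) ≤ L p * (1 + q * L q) := by
    nlinarith [hL_anti p q hp' hpq, mul_le_mul_of_nonneg_right hpq hLL]
  have hCC := mul_pos (hpos p hp') (hpos q hq')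
  nlinarith [mul_le_mul_of_nonneg_left hkey hCC.le]

-- by absorption `C(y,e) / C(y+1,e+1) = (e+1)/(y+1)` and `C(x-1,e) / C(x,e+1) = (e+1)/x`
theorem choose_add_one_mul_choose_sub_one_le {e : ℕ} {x y : ℝ} (hy : (e : ℝ) - 1 ≤ y)
    (hx : (e : ℝ) ≤ x) (hyx : y + 1 ≤ x) :
    choose (y + 1) (e + 1) * choose (x - 1) e ≤ choose y e * choose x (e + 1) := by
  have hy' := succ_mul_choose_succ (y + 1) e
  have hx' := succ_mul_choose_succ x e
  rw [add_sub_cancel_right] at hy'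
  have hC : 0 ≤ choose y e * choose (x - 1) e :=
    mul_nonneg (choose_nonneg hy) (choose_nonneg (by linarith))
  refine le_of_mul_le_mul_left ?_ (by positivity : (0 : ℝ) < e + 1)
  calc (e + 1 : ℝ) * (choose (y + 1) (e + 1) * choose (x - 1) e)
      = (y + 1) * (choose y e * choose (x - 1) e) := by linear_combination choose (x - 1) e * hy'
    _ ≤ x * (choose y e * choose (x - 1) e) := mul_le_mul_of_nonneg_right hyx hC
    _ = (e + 1) * (choose y e * choose x (e + 1)) := by linear_combination -choose y e * hx'

theorem choose_le_choose_add_choose {e : ℕ} {x y z : ℝ} (hx : (e : ℝ) + 1 ≤ x)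
    (hy : (e : ℝ) - 1 ≤ y) (hz : (e : ℝ) ≤ z)
    (hsum : choose (y + 1) (e + 1) + choose (z + 1) (e + 2) = choose (x + 1) (e + 2))
    (hlt : choose (y + 1) (e + 1) < choose x (e + 1)) :
    choose x (e + 1) ≤ choose y e + choose z (e + 1) := by
  have hmono (k : ℕ) {r s : ℝ} (hr : (k : ℝ) - 1 ≤ r) (hrs : r ≤ s) : choose r k ≤ choose s k :=
    monotoneOn_choose k hr (hr.trans hrs) hrs
  have hCy : 0 ≤ choose y e := choose_nonneg hy
  rcases le_or_gt x z with hxz | hzx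
  · have := hmono (e + 1) (by push_cast; linarith) hxz
    linarith
  have hX : 0 < choose x (e + 1) := choose_pos (by push_cast; linarith)
  have hpascal : choose (x + 1) (e + 2) = choose x (e + 1) + choose x (e + 2) :=
    choose_succ_succ x (e + 1)
  have hyx : y + 1 ≤ x := by
    by_contra! h
    linarith [hmono (e + 1) (by push_cast; linarith) h.le]
  have hxz : x ≤ z + 1 := by
    by_contra! h
    linarith [hmono (e + 2) (by push_cast; linarith) h.le]
  have hA := choose_add_one_mul_choose_sub_one_le hy (by linarith) hyx
  have hB := choose_sub_one_chord_le (e + 1) (by push_cast; linarith) hxz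
    (by linarith : z + 1 ≤ x + 1)
  rw [add_sub_cancel_right, add_sub_cancel_right,
    show choose (z + 1) (e + 1 + 1) - choose x (e + 1 + 1) =
      choose x (e + 1) - choose (y + 1) (e + 1) by linarith,
    show choose (x + 1) (e + 1 + 1) - choose (z + 1) (e + 1 + 1) = choose (y + 1) (e + 1) by
      linarith] at hB
  have hX_pascal : choose x (e + 1) = choose (x - 1) e + choose (x - 1) (e + 1) := by
    simpa using choose_succ_succ (x - 1) e
  have hsq : choose x (e + 1) * choose x (e + 1) ≤
      choose x (e + 1) * (choose y e + choose z (e + 1)) := by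
    rw [hX_pascal] at hB ⊢
    nlinarith [hB, hA]
  exact le_of_mul_le_mul_left hsq hX

end Ring

section Boundary

variable {F : Type} [Field F] {V : Type} [LinearOrder V]

variable (F) in
noncomputable def linkMap (v : V) : (Finset V →₀ F) →ₗ[F] Finset V →₀ F :=
  Finsupp.lsum F fun τ => if v ∈ τ then Finsupp.lsingle (τ.erase v) else 0

variable (F) in
noncomputable def avoidingProj (v : V) : (Finset V →₀ F) →ₗ[F] Finset V →₀ F :=
  Finsupp.lsum F fun τ => if v ∈ τ then 0 else Finsupp.lsingle τ

theorem linkMap_single (v : V) (τ : Finset V) (c : F) :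
    linkMap F v (Finsupp.single τ c) = if v ∈ τ then Finsupp.single (τ.erase v) c else 0 := by
  simp only [linkMap, Finsupp.lsum_single]
  split_ifs <;> simp

theorem avoidingProj_single (v : V) (τ : Finset V) (c : F) :
    avoidingProj F v (Finsupp.single τ c) = if v ∈ τ then 0 else Finsupp.single τ c := by
  simp only [avoidingProj, Finsupp.lsum_single]
  split_ifs <;> simp

theorem linkMap_sbdry_of_mem {v : V} {σ : Finset V} (hv : v ∈ σ) (hmax : ∀ w ∈ σ, w ≤ v) :
    linkMap F v (sbdry F σ) = sbdry F (σ.erase v) := by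
  rw [sbdry, sbdry, map_sum, ← add_sum_erase _ _ hv, map_smul, linkMap_single,
    if_neg (notMem_erase v σ), smul_zero, zero_add]
  refine sum_congr rfl fun w hw => ?_
  obtain ⟨hwv, hwσ⟩ := mem_erase.1 hw
  rw [map_smul, linkMap_single, if_pos (mem_erase.2 ⟨Ne.symm hwv, hv⟩), erase_right_comm]
  -- removing the largest vertex does not change the position of `w`
  congr 3
  rw [filter_erase, erase_eq_of_notMem]
  simpa using fun _ => hmax w hwσ

theorem linkMap_sbdry_of_notMem {v : V} {σ : Finset V} (hv : v ∉ σ) :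
    linkMap F v (sbdry F σ) = 0 := by
  rw [sbdry, map_sum]
  refine sum_eq_zero fun w _ => ?_
  rw [map_smul, linkMap_single, if_neg fun h => hv (mem_of_mem_erase h), smul_zero]

theorem avoidingProj_sbdry_of_mem {v : V} {σ : Finset V} (hv : v ∈ σ) (hmax : ∀ w ∈ σ, w ≤ v) :
    avoidingProj F v (sbdry F σ) = (-1 : F) ^ #(σ.erase v) • Finsupp.single (σ.erase v) 1 := by
  rw [sbdry, map_sum, ← add_sum_erase _ _ hv, sum_eq_zero, add_zero, map_smul,
    avoidingProj_single, if_neg (notMem_erase v σ)]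
  · congr 3
    ext w
    simp only [mem_filter, mem_erase]
    exact ⟨fun h => ⟨h.2.ne, h.1⟩, fun h => ⟨h.2, (hmax w h.2).lt_of_ne h.1⟩⟩
  · intro w hw
    obtain ⟨hwv, hwσ⟩ := mem_erase.1 hw
    rw [map_smul, avoidingProj_single, if_pos (mem_erase.2 ⟨Ne.symm hwv, hv⟩), smul_zero]

theorem finrank_map_add_finrank_le {M N : Type} [AddCommGroup M] [Module F M] [AddCommGroup N]
    [Module F N] (f : M →ₗ[F] N) {U W : Submodule F M} [FiniteDimensional F U] (hWU : W ≤ U)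
    (hWf : W ≤ LinearMap.ker f) :
    Module.finrank F (U.map f) + Module.finrank F W ≤ Module.finrank F U := by
  have hW : Module.finrank F W ≤ Module.finrank F (LinearMap.ker (f.domRestrict U)) := by
    rw [← (Submodule.comapSubtypeEquivOfLe hWU).finrank_eq]
    exact Submodule.finrank_mono fun u hu => hWf hu
  rw [← LinearMap.finrank_range_add_finrank_ker (f.domRestrict U), LinearMap.range_domRestrict]
  omega

theorem finiteDimensional_span_sbdry (B : Finset (Finset V)) :
    FiniteDimensional F (Submodule.span F ((fun σ => sbdry F σ) '' (B : Set (Finset V)))) :=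
  FiniteDimensional.span_of_finite F (B.finite_toSet.image _)

theorem card_memberSubfamily_le_rankBd {B : Finset (Finset V)} {v : V}
    (hmax : ∀ σ ∈ B, ∀ w ∈ σ, w ≤ v) : #(B.memberSubfamily v) ≤ rankBd F B := by
  have := finiteDimensional_span_sbdry (F := F) B
  let M := B.memberSubfamily v
  have hli : LinearIndependent F fun τ : M => Finsupp.single (τ : Finset V) (1 : F) :=
    (Finsupp.basisSingleOne (R := F)).linearIndependent.comp _ Subtype.val_injective
  have hle : Submodule.span F (Set.range fun τ : M => Finsupp.single (τ : Finset V) (1 : F)) ≤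
      (Submodule.span F ((fun σ => sbdry F σ) '' (B : Set (Finset V)))).map (avoidingProj F v) := by
    rw [Submodule.span_le]
    rintro _ ⟨⟨τ, hτ⟩, rfl⟩
    obtain ⟨hτB, hvτ⟩ := mem_memberSubfamily.1 hτ
    have h := avoidingProj_sbdry_of_mem (F := F) (mem_insert_self v τ) (hmax _ hτB)
    rw [erase_insert hvτ] at h
    have hmem : avoidingProj F v (sbdry F (insert v τ)) ∈
        (Submodule.span F ((fun σ => sbdry F σ) '' (B : Set (Finset V)))).map (avoidingProj F v) :=
      Submodule.mem_map_of_mem (Submodule.subset_span (Set.mem_image_of_mem _ hτB))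
    rw [h] at hmem
    simpa [smul_smul, ← pow_add, ← two_mul, pow_mul] using
      Submodule.smul_mem _ ((-1 : F) ^ #τ) hmem
  calc #M = Module.finrank F (Submodule.span F
        (Set.range fun τ : M => Finsupp.single (τ : Finset V) (1 : F))) := by
        rw [finrank_span_eq_card hli, Fintype.card_coe]
    _ ≤ _ := Submodule.finrank_mono hle
    _ ≤ rankBd F B := Submodule.finrank_map_le _ _

theorem rankBd_memberSubfamily_add_rankBd_nonMemberSubfamily_le {B : Finset (Finset V)} {v : V}
    (hmax : ∀ σ ∈ B, ∀ w ∈ σ, w ≤ v) :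
    rankBd F (B.memberSubfamily v) + rankBd F (B.nonMemberSubfamily v) ≤ rankBd F B := by
  have := finiteDimensional_span_sbdry (F := F) B
  set U := Submodule.span F ((fun σ => sbdry F σ) '' (B : Set (Finset V)))
  have hlink : Submodule.span F ((fun σ => sbdry F σ) '' (B.memberSubfamily v : Set (Finset V))) ≤
      U.map (linkMap F v) := by
    rw [Submodule.span_le]
    rintro _ ⟨τ, hτ, rfl⟩
    obtain ⟨hτB, hvτ⟩ := mem_memberSubfamily.1 hτ
    have h := linkMap_sbdry_of_mem (F := F) (mem_insert_self v τ) (hmax _ hτB)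
    rw [erase_insert hvτ] at h
    change sbdry F τ ∈ U.map (linkMap F v)
    rw [← h]
    exact Submodule.mem_map_of_mem (Submodule.subset_span (Set.mem_image_of_mem _ hτB))
  have hsub : Submodule.span F ((fun σ => sbdry F σ) '' (B.nonMemberSubfamily v : Set (Finset V)))
      ≤ U := Submodule.span_mono (Set.image_mono fun σ hσ => (mem_nonMemberSubfamily.1 hσ).1)
  have hker : Submodule.span F ((fun σ => sbdry F σ) '' (B.nonMemberSubfamily v : Set (Finset V)))
      ≤ LinearMap.ker (linkMap F v) := by
    rw [Submodule.span_le]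
    rintro _ ⟨σ, hσ, rfl⟩
    exact linkMap_sbdry_of_notMem (mem_nonMemberSubfamily.1 hσ).2
  exact (Nat.add_le_add_right (Submodule.finrank_mono hlink) _).trans
    (finrank_map_add_finrank_le (linkMap F v) hsub hker)

end Boundary

theorem exists_max_vertex {V : Type} [LinearOrder V] {B : Finset (Finset V)} {σ : Finset V}
    (hσ : σ ∈ B) (hne : σ.Nonempty) : ∃ v, (∃ τ ∈ B, v ∈ τ) ∧ ∀ τ ∈ B, ∀ w ∈ τ, w ≤ v := by
  obtain ⟨v, hv, hmax⟩ := exists_max_image (B.biUnion id) id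
    (hne.mono (subset_biUnion_of_mem id hσ))
  exact ⟨v, by simpa using hv, fun τ hτ w hw => hmax w (mem_biUnion.2 ⟨τ, hτ, hw⟩)⟩

theorem card_of_mem_memberSubfamily {V : Type} [DecidableEq V] {B : Finset (Finset V)} {d : ℕ}
    {v : V} (hB : ∀ σ ∈ B, #σ = d + 1) {τ : Finset V} (hτ : τ ∈ B.memberSubfamily v) : #τ = d := by
  obtain ⟨hτB, hvτ⟩ := mem_memberSubfamily.1 hτ
  simpa [card_insert_of_notMem hvτ] using hB _ hτB

theorem choose_le_rankBd (F : Type) [Field F] {V : Type} [LinearOrder V] (d : ℕ)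
    (B : Finset (Finset V)) (hB : ∀ σ ∈ B, #σ = d + 1) (x : ℝ) (hx : (d : ℝ) ≤ x)
    (hcard : (#B : ℝ) = Ring.choose (x + 1) (d + 1)) : Ring.choose x d ≤ rankBd F B := by
  induction hn : #B using Nat.strong_induction_on generalizing d B x with
  | _ n ih =>
  obtain ⟨σ, hσ⟩ : B.Nonempty := card_pos.1 <| Nat.one_le_cast.1 <|
    (Ring.one_le_choose (by push_cast; linarith)).trans_eq hcard.symm
  obtain ⟨v, ⟨τ, hτB, hvτ⟩, hmax⟩ := exists_max_vertex hσ (card_pos.1 (by rw [hB σ hσ]; omega))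
  have hM : 1 ≤ #(B.memberSubfamily v) :=
    card_pos.2 ⟨τ.erase v, mem_memberSubfamily.2 ⟨by rwa [insert_erase hvτ], notMem_erase v τ⟩⟩
  by_cases hlink : Ring.choose x d ≤ #(B.memberSubfamily v)
  · exact hlink.trans (by exact_mod_cast card_memberSubfamily_le_rankBd hmax)
  rw [not_le] at hlink
  obtain _ | e := d
  · rw [Ring.choose_zero_right] at hlink
    exact absurd hlink (not_lt.2 (by exact_mod_cast hM))
  have hsplit := card_memberSubfamily_add_card_nonMemberSubfamily v B
  have hN : 1 ≤ #(B.nonMemberSubfamily v) := by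
    have hpascal := Ring.choose_succ_succ x (e + 1)
    have := Ring.choose_nonneg (r := x) (n := e + 2) (by push_cast at hx ⊢; linarith)
    have : #(B.memberSubfamily v) < #B := by
      exact_mod_cast (by linarith : (#(B.memberSubfamily v) : ℝ) < #B)
    omega
  obtain ⟨y, hy, hyM⟩ := Ring.exists_natCast_eq_choose e hM
  obtain ⟨z, hz, hzN⟩ := Ring.exists_natCast_eq_choose (e + 1) hN
  have ihM := ih _ (by omega) e (B.memberSubfamily v) (fun τ => card_of_mem_memberSubfamily hB)
    y hy hyM rfl
  have ihN := ih _ (by omega) (e + 1) (B.nonMemberSubfamily v)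
    (fun σ hσ => hB σ (mem_nonMemberSubfamily.1 hσ).1) z (by push_cast at hz ⊢; linarith) hzN rfl
  calc Ring.choose x (e + 1) ≤ Ring.choose y e + Ring.choose z (e + 1) := by
        refine Ring.choose_le_choose_add_choose (by push_cast at hx; linarith) (by linarith)
          (by push_cast at hz; linarith) ?_ (hyM ▸ hlink)
        rw [← hyM, ← hzN, ← Nat.cast_add, hsplit, hcard]
    _ ≤ rankBd F (B.memberSubfamily v) + rankBd F (B.nonMemberSubfamily v) := add_le_add ihM ihN
    _ ≤ rankBd F B := by exact_mod_cast rankBd_memberSubfamily_add_rankBd_nonMemberSubfamily_le hmax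

theorem rank_boundaries_ge_binom_general (F : Type) [Field F] {V : Type} [LinearOrder V]
    (d : ℕ) (B : Finset (Finset V)) (hB : ∀ σ ∈ B, σ.card = d + 1)
    (x : ℝ) (hx : (d : ℝ) ≤ x)
    (hcard : (B.card : ℝ) = (descPochhammer ℝ (d + 1)).eval (x + 1) / (Nat.factorial (d + 1) : ℝ)) :
    ((descPochhammer ℝ d).eval x / (Nat.factorial d : ℝ)) ≤ (rankBd F B : ℝ) := by
  rw [← Ring.choose_eq_descPochhammer_eval_div] at hcard ⊢
  exact choose_le_rankBd F d B hB x hx hcard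

/-- Kruskal–Katona-type bound on the rank of families of `d`-simplices
(implicit in Balogh–Krueger, via Lovász's form of the Kruskal–Katona theorem):
if `B` is a family of `d`-simplices on a linearly ordered vertex set with
`|B| = binom(x+1, d+1)` for a real number `x ≥ d` (generalized binomial
coefficient), then the rank over a field `F` of the set of boundaries
`{∂σ : σ ∈ B}` is at least `binom(x, d)`. -/
theorem rank_boundaries_ge_binom (F : Type) [Field F] {V : Type} [LinearOrder V]
    (d : ℕ) (hd : 1 ≤ d) (B : Finset (Finset V)) (hB : ∀ σ ∈ B, σ.card = d + 1)
    (x : ℝ) (hx : (d : ℝ) ≤ x)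
    (hcard : (B.card : ℝ) = (descPochhammer ℝ (d + 1)).eval (x + 1) / (Nat.factorial (d + 1) : ℝ)) :
    ((descPochhammer ℝ d).eval x / (Nat.factorial d : ℝ)) ≤ (rankBd F B : ℝ) :=
  rank_boundaries_ge_binom_general F d B hB x hx hcard
end

section
/- Fix a field F and an integer d >= 1. Let z be a nontrivial d-cycle over F with support C. Then every vertex belonging to some simplex of C belongs to at least d+1 distinct simplices of C. Consequently, if A is a finite set of d-simplices such that every simplex of A lies in the support of some nontrivial d-cycle supported inside A, then the number of vertices covered by A is at most |A|. -/
open Finset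

section Aux

variable {F : Type} [Field F] {V : Type} [LinearOrder V]

lemma sbdry_apply (σ τ : Finset V) :
    (sbdry F σ) τ = ∑ v ∈ σ, ((-1 : F) ^ ((σ.filter (fun w => w < v)).card)) *
      (if σ.erase v = τ then 1 else 0) := by
  rw [sbdry, Finsupp.finset_sum_apply]
  refine Finset.sum_congr rfl fun v hv => ?_
  rw [Finsupp.smul_apply, Finsupp.single_apply, smul_eq_mul]

lemma sbdry_ne_zero_imp {σ τ : Finset V} (h : (sbdry F σ) τ ≠ 0) :
    ∃ v ∈ σ, σ.erase v = τ := by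
  by_contra hc
  push_neg at hc
  exact h (by rw [sbdry_apply]; exact Finset.sum_eq_zero fun v hv => by simp [hc v hv])

lemma sbdry_erase_ne_zero {σ : Finset V} {v : V} (hv : v ∈ σ) :
    (sbdry F σ) (σ.erase v) ≠ 0 := by
  rw [sbdry_apply, Finset.sum_eq_single v]
  · simp
  · intro w hw hne
    rw [if_neg (fun h => hne ((Finset.erase_inj σ hw).mp h)), mul_zero]
  · intro h; exact absurd hv h

lemma exists_other {d : ℕ} {z : (Finset V) →₀ F} (hz : IsCycle F d z)
    {σ : Finset V} (hσ : σ ∈ z.support) {v : V} (hv : v ∈ σ) :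
    ∃ σ' ∈ z.support, σ' ≠ σ ∧ σ.erase v ⊆ σ' := by
  by_contra hc
  push_neg at hc
  have h0 := DFunLike.congr_fun hz.2 (σ.erase v)
  rw [Finsupp.finset_sum_apply] at h0
  simp only [Finsupp.smul_apply, smul_eq_mul, Finsupp.coe_zero, Pi.zero_apply] at h0
  rw [Finset.sum_eq_single σ] at h0
  · exact mul_ne_zero (Finsupp.mem_support_iff.mp hσ) (sbdry_erase_ne_zero hv) h0
  · intro σ'' h'' hne
    rcases eq_or_ne ((sbdry F σ'') (σ.erase v)) 0 with h | h
    · rw [h, mul_zero]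
    · obtain ⟨w, hw, he⟩ := sbdry_ne_zero_imp h
      exact absurd (he ▸ Finset.erase_subset w σ'') (hc σ'' h'' hne)
  · intro h; exact absurd hσ h

lemma deg_lemma {d : ℕ} {z : (Finset V) →₀ F} (hz : IsCycle F d z) :
    ∀ σ ∈ z.support, ∀ v ∈ σ,
      d + 1 ≤ (z.support.filter (fun σ' => v ∈ σ')).card := by
  intro σ hσ v hv
  have hcard : σ.card = d + 1 := hz.1 σ hσ
  have H : ∀ w ∈ σ.erase v, ∃ σ', (σ' ∈ z.support ∧ σ' ≠ σ ∧ σ.erase w ⊆ σ') :=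
    fun w hw => by
      obtain ⟨σ', h1, h2, h3⟩ := exists_other hz hσ (Finset.mem_of_mem_erase hw)
      exact ⟨σ', h1, h2, h3⟩
  choose! f hf1 hf2 hf3 using H
  have hvf : ∀ w ∈ σ.erase v, v ∈ f w := fun w hw =>
    hf3 w hw (Finset.mem_erase.mpr ⟨(Finset.ne_of_mem_erase hw).symm, hv⟩)
  have hinj : Set.InjOn f (σ.erase v) := by
    intro w hw w' hw' hww
    simp only [Finset.coe_erase, Set.mem_diff, Set.mem_singleton_iff, Finset.mem_coe] at hw hw'
    by_contra hne
    have hsub : σ ⊆ f w := by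
      intro x hx
      rcases eq_or_ne x w with rfl | hxw
      · rw [hww]
        exact hf3 w' (Finset.mem_erase.mpr ⟨hw'.2, hw'.1⟩)
          (Finset.mem_erase.mpr ⟨hne, hx⟩)
      · exact hf3 w (Finset.mem_erase.mpr ⟨hw.2, hw.1⟩) (Finset.mem_erase.mpr ⟨hxw, hx⟩)
    have : σ = f w := Finset.eq_of_subset_of_card_le hsub
      (by rw [hz.1 (f w) (hf1 w (Finset.mem_erase.mpr ⟨hw.2, hw.1⟩)), hcard])
    exact hf2 w (Finset.mem_erase.mpr ⟨hw.2, hw.1⟩) this.symm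
  have hSsub : insert σ ((σ.erase v).image f) ⊆
      z.support.filter (fun σ' => v ∈ σ') := by
    intro τ hτ
    rcases Finset.mem_insert.mp hτ with rfl | hτ
    · exact Finset.mem_filter.mpr ⟨hσ, hv⟩
    · obtain ⟨w, hw, rfl⟩ := Finset.mem_image.mp hτ
      exact Finset.mem_filter.mpr ⟨hf1 w hw, hvf w hw⟩
  have hσnotmem : σ ∉ (σ.erase v).image f := by
    intro h
    obtain ⟨w, hw, he⟩ := Finset.mem_image.mp h
    exact hf2 w hw he
  calc d + 1 = (σ.erase v).card + 1 := by
        rw [Finset.card_erase_of_mem hv, hcard]; omega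
    _ = (insert σ ((σ.erase v).image f)).card := by
        rw [Finset.card_insert_of_notMem hσnotmem,
          Finset.card_image_of_injOn hinj]
    _ ≤ _ := Finset.card_le_card hSsub

end Aux

/-- Let `z` be a nontrivial `d`-cycle over a field `F` (`d ≥ 1`).  Then every vertex
belonging to some simplex of the support of `z` belongs to at least `d+1` distinct
simplices of the support.  Consequently, for any finite set `A` of `d`-simplices such
that every simplex of `A` lies in the support of some nontrivial `d`-cycle supported
inside `A`, the number of vertices covered by `A` is at most `|A|`. -/
theorem vertices_of_cycle_support (F : Type) [Field F] {V : Type} [LinearOrder V]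
    (d : ℕ) (hd : 1 ≤ d) (z : (Finset V) →₀ F) (hz : IsCycle F d z) (hz0 : z ≠ 0) :
    (∀ σ ∈ z.support, ∀ v ∈ σ,
      d + 1 ≤ (z.support.filter (fun σ' => v ∈ σ')).card) ∧
    (∀ A : Finset (Finset V), (∀ σ ∈ A, σ.card = d + 1) →
      (∀ σ ∈ A, ∃ c : (Finset V) →₀ F, IsCycle F d c ∧ c ≠ 0 ∧ c.support ⊆ A ∧
        σ ∈ c.support) →
      (A.biUnion id).card ≤ A.card) := by
  refine ⟨deg_lemma hz, ?_⟩
  intro A hA hcyc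
  set B := A.biUnion id with hB
  have hdeg : ∀ v ∈ B, d + 1 ≤ (A.filter (fun σ => v ∈ σ)).card := by
    intro v hv
    obtain ⟨σ, hσA, hvσ⟩ := Finset.mem_biUnion.mp hv
    obtain ⟨c, hc, hc0, hcA, hσc⟩ := hcyc σ hσA
    calc d + 1 ≤ (c.support.filter (fun σ' => v ∈ σ')).card :=
          deg_lemma hc σ hσc v hvσ
      _ ≤ (A.filter (fun σ => v ∈ σ)).card :=
          Finset.card_le_card (Finset.filter_subset_filter _ hcA)
  have h1 : B.card * (d + 1) ≤ ∑ v ∈ B, (A.filter (fun σ => v ∈ σ)).card := by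
    simpa using Finset.card_nsmul_le_sum B _ (d + 1) hdeg
  have h2 : ∑ v ∈ B, (A.filter (fun σ => v ∈ σ)).card = ∑ σ ∈ A, σ.card := by
    simp_rw [Finset.card_filter]
    rw [Finset.sum_comm]
    refine Finset.sum_congr rfl fun σ hσ => ?_
    rw [← Finset.card_filter]
    congr 1
    ext x
    simp only [Finset.mem_filter]
    exact ⟨fun h => h.2, fun h => ⟨Finset.mem_biUnion.mpr ⟨σ, hσ, h⟩, h⟩⟩
  have h3 : ∑ σ ∈ A, σ.card = A.card * (d + 1) := by
    rw [Finset.sum_congr rfl hA, Finset.sum_const, smul_eq_mul]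
  exact Nat.le_of_mul_le_mul_right (h1.trans (le_of_eq (h2.trans h3))) (Nat.succ_pos d)
end
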